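/- Let V_1, ..., V_j and U_1, ..., U_m be distinct coordinates of I and let D ⊆ I be disjoint from all of them. Let C_i ⊆ I with V_i ∉ C_i and E_k ⊆ I with U_k ∉ E_k, and assume: (i) for every assignment ω ∈ Ω, (∏_{k=1}^m P(U_k = ω_{U_k} | E_k = ω|_{E_k})) · (∏_{i=1}^j P(V_i = ω_{V_i} | C_i = ω|_{C_i})) = P({V_1, ..., V_j, U_1, ..., U_m} = ω | D = ω|_D); and (ii) there is a subset M⁺ ⊆ {U_1, ..., U_m} such that for every assignment ω ∈ Ω, ∏_{U_k ∈ M⁺} P(U_k = ω_{U_k} | E_k = ω|_{E_k}) = P(M⁺ = ω|_{M⁺} | D = ω|_D). Then for every assignment ω ∈ Ω: (∏_{U_k ∉ M⁺} P(U_k = ω_{U_k} | E_k = ω|_{E_k})) · (∏_{i=1}^j P(V_i = ω_{V_i} | C_i = ω|_{C_i})) = P(({V_1, ..., V_j} ∪ ({U_1, ..., U_m} \ M⁺)) = ω | (D ∪ M⁺) = ω|_{D ∪ M⁺}). -/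

import Mathlib

open Finset

/-- Marginal probability `P(S = ω|_S)` of a strictly positive pmf `P` on a finite
product: the sum of `P ω'` over all assignments `ω'` agreeing with `ω` on `S`. -/
noncomputable def marg {I : Type} [Fintype I] [DecidableEq I] {F : I → Type}
    [∀ i, Fintype (F i)] [∀ i, DecidableEq (F i)]
    (P : (∀ i, F i) → ℝ) (S : Finset I) (ω : ∀ i, F i) : ℝ :=
  ∑ ω' : ∀ i, F i, if ∀ i ∈ S, ω' i = ω i then P ω' else 0

/-- Elementary conditional probability `P(T = ω|_T | S = ω|_S)`. -/
noncomputable def condP {I : Type} [Fintype I] [DecidableEq I] {F : I → Type}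
    [∀ i, Fintype (F i)] [∀ i, DecidableEq (F i)]
    (P : (∀ i, F i) → ℝ) (T S : Finset I) (ω : ∀ i, F i) : ℝ :=
  marg P (S ∪ T) ω / marg P S ω

/-- Conditional independence of coordinates `a` and `b` given the set `S`. -/
def condIndep {I : Type} [Fintype I] [DecidableEq I] {F : I → Type}
    [∀ i, Fintype (F i)] [∀ i, DecidableEq (F i)]
    (P : (∀ i, F i) → ℝ) (a b : I) (S : Finset I) : Prop :=
  ∀ ω, condP P {a, b} S ω = condP P {a} S ω * condP P {b} S ω

lemma marg_pos {I : Type} [Fintype I] [DecidableEq I] {F : I → Type}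
    [∀ i, Fintype (F i)] [∀ i, DecidableEq (F i)]
    {P : (∀ i, F i) → ℝ} (hpos : ∀ ω, 0 < P ω) (S : Finset I) (ω : ∀ i, F i) :
    0 < marg P S ω := by
  have h : P ω ≤ marg P S ω := by
    unfold marg
    have := Finset.single_le_sum (f := fun ω' => if ∀ i ∈ S, ω' i = ω i then P ω' else 0)
      (fun i _ => by split <;> [exact (hpos i).le; rfl]) (Finset.mem_univ ω)
    simpa using this
  linarith [hpos ω]

lemma condP_pos {I : Type} [Fintype I] [DecidableEq I] {F : I → Type}
    [∀ i, Fintype (F i)] [∀ i, DecidableEq (F i)]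
    {P : (∀ i, F i) → ℝ} (hpos : ∀ ω, 0 < P ω) (T S : Finset I) (ω : ∀ i, F i) :
    0 < condP P T S ω :=
  div_pos (marg_pos hpos _ _) (marg_pos hpos _ _)

theorem eliminate_M_plus {I : Type} [Fintype I] [DecidableEq I] {F : I → Type}
    [∀ i, Fintype (F i)] [∀ i, DecidableEq (F i)] [∀ i, Nonempty (F i)]
    (P : (∀ i, F i) → ℝ) (hpos : ∀ ω, 0 < P ω) (hsum : ∑ ω, P ω = 1)
    {j m : ℕ} (V : Fin j → I) (hV : Function.Injective V)
    (U : Fin m → I) (hU : Function.Injective U)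
    (hVU : ∀ i k, V i ≠ U k)
    (D : Finset I) (hDV : ∀ i, V i ∉ D) (hDU : ∀ k, U k ∉ D)
    (C : Fin j → Finset I) (hC : ∀ i, V i ∉ C i)
    (E : Fin m → Finset I) (hE : ∀ k, U k ∉ E k)
    (hfact : ∀ ω, (∏ k, condP P {U k} (E k) ω) * (∏ i, condP P {V i} (C i) ω) =
      condP P (univ.image V ∪ univ.image U) D ω)
    (M : Finset (Fin m))
    (hM : ∀ ω, (∏ k ∈ M, condP P {U k} (E k) ω) = condP P (M.image U) D ω) :
    ∀ ω, (∏ k ∈ Mᶜ, condP P {U k} (E k) ω) * (∏ i, condP P {V i} (C i) ω) =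
      condP P (univ.image V ∪ Mᶜ.image U) (D ∪ M.image U) ω := by
  intro ω
  have hsplit : (∏ k, condP P {U k} (E k) ω)
      = (∏ k ∈ M, condP P {U k} (E k) ω) * (∏ k ∈ Mᶜ, condP P {U k} (E k) ω) :=
    (Finset.prod_mul_prod_compl M _).symm
  have hMpos : 0 < ∏ k ∈ M, condP P {U k} (E k) ω :=
    Finset.prod_pos fun k _ => condP_pos hpos _ _ _
  have hset : (D ∪ M.image U) ∪ (univ.image V ∪ Mᶜ.image U)
      = D ∪ (univ.image V ∪ univ.image U) := by
    ext x
    simp only [Finset.mem_union, Finset.mem_image, Finset.mem_univ, true_and,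
      Finset.mem_compl]
    constructor
    · rintro ((h | ⟨k, hk, rfl⟩) | (⟨i, rfl⟩ | ⟨k, hk, rfl⟩))
      · exact Or.inl h
      · exact Or.inr (Or.inr ⟨k, rfl⟩)
      · exact Or.inr (Or.inl ⟨i, rfl⟩)
      · exact Or.inr (Or.inr ⟨k, rfl⟩)
    · rintro (h | (⟨i, rfl⟩ | ⟨k, rfl⟩))
      · exact Or.inl (Or.inl h)
      · exact Or.inr (Or.inl ⟨i, rfl⟩)
      · by_cases hk : k ∈ M
        · exact Or.inl (Or.inr ⟨k, hk, rfl⟩)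
        · exact Or.inr (Or.inr ⟨k, hk, rfl⟩)
  have hchain : condP P (univ.image V ∪ univ.image U) D ω
      = condP P (M.image U) D ω
        * condP P (univ.image V ∪ Mᶜ.image U) (D ∪ M.image U) ω := by
    unfold condP
    rw [hset]
    have h1 := (marg_pos hpos D ω).ne'
    have h2 := (marg_pos hpos (D ∪ M.image U) ω).ne'
    field_simp
  have h1 := hfact ω
  rw [hsplit, hchain, ← hM ω, mul_assoc] at h1
  exact mul_left_cancel₀ hMpos.ne' h1
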